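/- (Accuracy of discrete 3DVAR with bounded noise.) Let F > 0, K = 2JF², and β = 2(2√K − 1) with β > 0, and define the norm ‖z‖ = |z| + |Pz| on ℝ^J. For every R0 > 0 there exist h > 0, η > 0, α ∈ (0,1) and ε0 > 0 with the following property. Let v be a solution of the Lorenz '96 equation on [0,∞) with |v(t)|² ≤ K for all t ≥ 0, let 0 < ε ≤ ε0, let (ν_k)_{k≥1} be a sequence in ℝ^J with ν_k = Pν_k and |ν_k| ≤ ε for all k, and let (m_k)_{k≥0} be a sequence in ℝ^J with ‖m_0 − v(0)‖ ≤ R0 satisfying the 3DVAR recursion m_{k+1} = (η/(1+η))·P·u_k(h) + Q·u_k(h) + (1/(1+η))·(P·v((k+1)h) + ν_{k+1}), where for each k the function u_k : [0,h] → ℝ^J is a solution of the Lorenz '96 equation with u_k(0) = m_k. Then for all k ≥ 0, ‖m_{k+1} − v((k+1)h)‖ ≤ α·‖m_k − v(kh)‖ + 2ε, and consequently limsup_{k→∞} ‖m_k − v(kh)‖ ≤ 2ε/(1−α). -/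

import Mathlib

/-!
Let `w = u - v` be the difference between the forecast and the truth on one assimilation window
`[0, h]`. It solves `w' = -w - B(w, u + v)`; on an absorbing ball of radius `M` this gives
`|w(t)| ≤ e^{(1+4M)t} |w(0)|`, so the observed part `Pw` drifts only by `O(h |w(0)|)`.
When `3 ∣ J`, each unobserved coordinate `j ≡ 0 (mod 3)` sees only observed neighbours in
`B(w, u + v)^(j)`, so `QB(w, u + v)` is controlled by `|Pw|` alone and the damping `-Qw` yields
`|Qw(h)| ≤ e^{-h/2} |Qw(0)| + O(√h |Pw|)`. The analysis step shrinks the observed error by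
`η/(1+η)` and keeps the unobserved one, so for small `h` and `η` the norm `|z| + |Pz|` of the
error contracts by `α = 1 - h/8` up to the noise `2ε`. With `ε ≤ h R₀/16` the errors stay in the
ball of radius `R₀` on which these bounds hold, and the geometric recursion bounds the limsup.
-/

open scoped RealInnerProductSpace

noncomputable section

/-- The Lorenz '96 bilinear map `B` on `ℝ^J`, with cyclic indexing via `ZMod J`:
`B(u,w)^(j) = -(1/2)[w^(j-1)u^(j+1) + u^(j-1)w^(j+1) - w^(j-2)u^(j-1) - u^(j-2)w^(j-1)]`. -/
def L96B {J : ℕ} [NeZero J] (u w : EuclideanSpace ℝ (ZMod J)) :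
    EuclideanSpace ℝ (ZMod J) :=
  WithLp.toLp 2 (fun j => -(1/2 : ℝ) * (w (j - 1) * u (j + 1) + u (j - 1) * w (j + 1)
    - w (j - 2) * u (j - 1) - u (j - 2) * w (j - 1)))

/-- The constant forcing vector `f = (F, ..., F)`. -/
def L96f {J : ℕ} [NeZero J] (F : ℝ) : EuclideanSpace ℝ (ZMod J) := WithLp.toLp 2 (fun _ => F)

/-- `u` solves the Lorenz '96 equation `u' = -u - B(u,u) + f` on the set `I`. -/
def L96Sol {J : ℕ} [NeZero J] (F : ℝ) (I : Set ℝ)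
    (u : ℝ → EuclideanSpace ℝ (ZMod J)) : Prop :=
  ∀ t ∈ I, HasDerivAt u (-u t - L96B (u t) (u t) + L96f F) t

/-- The projection `P` setting to zero every third coordinate
(those with 1-based index `≡ 0 mod 3`, i.e. `ZMod J`-index with value `≡ 0 mod 3`
when `3 ∣ J`). -/
def L96P {J : ℕ} [NeZero J] (u : EuclideanSpace ℝ (ZMod J)) :
    EuclideanSpace ℝ (ZMod J) :=
  WithLp.toLp 2 (fun j => if j.val % 3 = 0 then 0 else u j)

/-- The complementary projection `Q = I - P`. -/
def L96Q {J : ℕ} [NeZero J] (u : EuclideanSpace ℝ (ZMod J)) :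
    EuclideanSpace ℝ (ZMod J) :=
  u - L96P u

theorem sq_apply_le_sq_norm {ι : Type*} [Fintype ι] (x : EuclideanSpace ℝ ι) (i : ι) :
    x i ^ 2 ≤ ‖x‖ ^ 2 := by
  simpa [sq_abs] using pow_le_pow_left₀ (norm_nonneg _) (PiLp.norm_apply_le x i) 2

-- `g(t) = eᵗ (‖w t‖² - c²)` is antitone, since `g' = -eᵗ (‖w t‖ - c)² + 2eᵗ (⟪w, w' + w⟫ - c‖w‖)`.
theorem norm_sq_le_of_inner_add_deriv_le {V : Type*} [NormedAddCommGroup V]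
    [InnerProductSpace ℝ V] {w w' : ℝ → V} {T c : ℝ}
    (hw : ∀ t ∈ Set.Icc 0 T, HasDerivAt w (w' t) t)
    (hc : ∀ t ∈ Set.Icc 0 T, ⟪w t, w' t + w t⟫ ≤ c * ‖w t‖) :
    ∀ t ∈ Set.Icc 0 T,
      ‖w t‖ ^ 2 ≤ Real.exp (-t) * ‖w 0‖ ^ 2 + c ^ 2 * (1 - Real.exp (-t)) := by
  set g : ℝ → ℝ := fun t => Real.exp t * (‖w t‖ ^ 2 - c ^ 2)
  have hg : ∀ t ∈ Set.Icc 0 T, HasDerivAt g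
      (Real.exp t * (‖w t‖ ^ 2 - c ^ 2) + Real.exp t * (2 * ⟪w t, w' t⟫)) t := fun t ht =>
    (Real.hasDerivAt_exp t).mul ((hw t ht).norm_sq.sub_const _)
  have hanti : AntitoneOn g (Set.Icc 0 T) := by
    refine antitoneOn_of_hasDerivWithinAt_nonpos (convex_Icc 0 T)
      (fun t ht => (hg t ht).continuousAt.continuousWithinAt)
      (fun t ht => (hg t (interior_subset ht)).hasDerivWithinAt) fun t ht => ?_
    have h := hc t (interior_subset ht)
    rw [inner_add_right, real_inner_self_eq_norm_sq] at h
    nlinarith [Real.exp_pos t, sq_nonneg (‖w t‖ - c)]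
  intro t ht
  have h := hanti ⟨le_rfl, ht.1.trans ht.2⟩ ht ht.1
  simp only [g, Real.exp_zero, one_mul] at h
  have hinv : Real.exp (-t) * Real.exp t = 1 := by
    rw [← Real.exp_add, neg_add_cancel, Real.exp_zero]
  nlinarith [Real.exp_pos (-t)]

theorem exp_neg_half_le {h : ℝ} (h0 : 0 ≤ h) (h1 : h ≤ 1) : Real.exp (-(h / 2)) ≤ 1 - h / 4 := by
  have := (abs_le.1 (Real.abs_exp_sub_one_sub_id_le (x := -(h / 2))
    (by rw [abs_neg, abs_of_nonneg (by positivity)]; linarith))).2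
  nlinarith

theorem limsup_le_div_one_sub_of_le_mul_add {x : ℕ → ℝ} {α b : ℝ} (hx : ∀ k, 0 ≤ x k)
    (hα0 : 0 ≤ α) (hα1 : α < 1) (hstep : ∀ k, x (k + 1) ≤ α * x k + b) :
    Filter.limsup x Filter.atTop ≤ b / (1 - α) := by
  set c := b / (1 - α)
  have hc : α * c + b = c := by
    simp only [c]; field_simp [(sub_pos.2 hα1).ne']; ring
  have hgeo : ∀ k, x k ≤ c + α ^ k * (x 0 - c) := by
    intro k
    induction k with
    | zero => simp
    | succ k ih =>
      calc x (k + 1) ≤ α * (c + α ^ k * (x 0 - c)) + b :=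
            (hstep k).trans (by gcongr)
        _ = c + α ^ (k + 1) * (x 0 - c) := by linear_combination hc
  have hlim : Filter.Tendsto (fun k => c + α ^ k * (x 0 - c)) Filter.atTop (nhds c) := by
    simpa using tendsto_const_nhds.add
      ((tendsto_pow_atTop_nhds_zero_of_lt_one hα0 hα1).mul_const (x 0 - c))
  exact (Filter.limsup_le_limsup (Filter.Eventually.of_forall hgeo)
    (Filter.isCoboundedUnder_le_of_le _ hx) hlim.isBoundedUnder_le).trans hlim.limsup_eq.le

variable {J : ℕ} [NeZero J]

local notation "E" => EuclideanSpace ℝ (ZMod J)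

section Nonlinearity

def shiftMul (a b : ZMod J) (x y : E) : E := WithLp.toLp 2 fun j => x (j + a) * y (j + b)

theorem norm_shiftMul_le (a b : ZMod J) (x y : E) : ‖shiftMul a b x y‖ ≤ ‖x‖ * ‖y‖ := by
  refine (sq_le_sq₀ (norm_nonneg _) (by positivity)).1 ?_
  calc ‖shiftMul a b x y‖ ^ 2 = ∑ j, x (j + a) ^ 2 * y (j + b) ^ 2 := by
        simp only [shiftMul, EuclideanSpace.real_norm_sq_eq, mul_pow]
    _ ≤ ∑ j, ‖x‖ ^ 2 * y (j + b) ^ 2 :=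
        Finset.sum_le_sum fun j _ =>
          mul_le_mul_of_nonneg_right (sq_apply_le_sq_norm x _) (sq_nonneg _)
    _ = (‖x‖ * ‖y‖) ^ 2 := by
        rw [← Finset.mul_sum, Fintype.sum_equiv (Equiv.addRight b) (fun j => y (j + b) ^ 2)
          (fun j => y j ^ 2) fun _ => rfl, ← EuclideanSpace.real_norm_sq_eq, mul_pow]

theorem L96B_eq_shiftMul (u w : E) :
    L96B u w = (-(1 / 2) : ℝ) • (shiftMul (-1) 1 w u + shiftMul (-1) 1 u w
      - shiftMul (-2) (-1) w u - shiftMul (-2) (-1) u w) := by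
  ext j
  simp only [L96B, shiftMul, PiLp.toLp_apply, PiLp.smul_apply, PiLp.add_apply, PiLp.sub_apply,
    smul_eq_mul, ← sub_eq_add_neg]

theorem norm_L96B_le (u w : E) : ‖L96B u w‖ ≤ 2 * ‖u‖ * ‖w‖ := by
  have h1 := norm_shiftMul_le (-1) 1 w u
  have h2 := norm_shiftMul_le (-1) 1 u w
  have h3 := norm_shiftMul_le (-2) (-1) w u
  have h4 := norm_shiftMul_le (-2) (-1) u w
  calc ‖L96B u w‖ ≤ 1 / 2 * (‖w‖ * ‖u‖ + ‖u‖ * ‖w‖ + ‖w‖ * ‖u‖ + ‖u‖ * ‖w‖) := by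
        rw [L96B_eq_shiftMul, norm_smul, norm_neg, Real.norm_of_nonneg (by norm_num)]
        gcongr
        exact norm_sub_le_of_le (norm_sub_le_of_le (norm_add_le_of_le h1 h2) h3) h4
    _ = 2 * ‖u‖ * ‖w‖ := by ring

theorem L96B_self_sub_L96B_self (u v : E) : L96B u u - L96B v v = L96B (u - v) (u + v) := by
  ext j
  simp only [L96B, PiLp.sub_apply, PiLp.add_apply, PiLp.toLp_apply]
  ring

theorem inner_L96B_self (u : E) : ⟪L96B u u, u⟫ = 0 := by
  have hshift : ∑ j : ZMod J, u (j - 2) * u (j - 1) * u j =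
      ∑ j : ZMod J, u (j - 1) * u j * u (j + 1) := by
    rw [← Equiv.sum_comp (Equiv.addRight 1)]
    simp only [Equiv.coe_addRight, show ∀ j : ZMod J, j + 1 - 2 = j - 1 from fun j => by ring,
      add_sub_cancel_right]
  simp only [PiLp.inner_apply, RCLike.inner_apply, conj_trivial, L96B]
  rw [← sub_eq_zero.2 hshift, ← Finset.sum_sub_distrib]
  exact Finset.sum_congr rfl fun j _ => by ring

end Nonlinearity

section Projections

theorem L96P_apply (x : E) (j : ZMod J) : L96P x j = if j.val % 3 = 0 then 0 else x j := rfl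

theorem L96Q_apply (x : E) (j : ZMod J) : L96Q x j = if j.val % 3 = 0 then x j else 0 := by
  simp only [L96Q, PiLp.sub_apply, L96P_apply]
  split_ifs <;> simp

def L96PL : E →L[ℝ] E := LinearMap.toContinuousLinearMap
  { toFun := L96P
    map_add' := fun x y => by ext j; simp only [L96P_apply, PiLp.add_apply]; split_ifs <;> simp
    map_smul' := fun c x => by
      ext j; simp only [L96P_apply, PiLp.smul_apply, smul_eq_mul]; split_ifs <;> simp }

theorem L96PL_apply (x : E) : L96PL x = L96P x := rfl

theorem L96P_sub (x y : E) : L96P (x - y) = L96P x - L96P y := map_sub L96PL x y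

theorem L96P_L96P (x : E) : L96P (L96P x) = L96P x := by
  ext j; simp only [L96P_apply]; split_ifs <;> rfl

theorem L96P_L96Q (x : E) : L96P (L96Q x) = 0 := by
  ext j; simp only [L96P_apply, L96Q_apply]; split_ifs <;> rfl

theorem norm_L96P_le (x : E) : ‖L96P x‖ ≤ ‖x‖ := by
  refine (sq_le_sq₀ (norm_nonneg _) (norm_nonneg _)).1 ?_
  simp only [EuclideanSpace.real_norm_sq_eq, L96P_apply]
  exact Finset.sum_le_sum fun j _ => by split_ifs <;> simp [sq_nonneg]

theorem norm_L96Q_le (x : E) : ‖L96Q x‖ ≤ ‖x‖ := by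
  refine (sq_le_sq₀ (norm_nonneg _) (norm_nonneg _)).1 ?_
  simp only [EuclideanSpace.real_norm_sq_eq, L96Q_apply]
  exact Finset.sum_le_sum fun j _ => by split_ifs <;> simp [sq_nonneg]

theorem val_mod_three_eq_zero_iff (h3 : 3 ∣ J) (j : ZMod J) :
    j.val % 3 = 0 ↔ ZMod.castHom h3 (ZMod 3) j = 0 := by
  rw [ZMod.castHom_apply, ← ZMod.natCast_val, ZMod.natCast_eq_zero_iff, Nat.dvd_iff_mod_eq_zero]

-- With `3 ∣ J`, the unobserved coordinates are exactly the `j ≡ 0 mod 3`, whose neighbours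
-- `j - 2, j - 1, j + 1` entering `B(u,w)^(j)` are all observed.
theorem L96Q_L96B (h3 : 3 ∣ J) (u w : E) : L96Q (L96B u w) = L96Q (L96B (L96P u) (L96P w)) := by
  ext j
  simp only [L96Q_apply]
  split_ifs with hj
  · have hj' := (val_mod_three_eq_zero_iff h3 j).1 hj
    have hnb : ∀ i : ZMod 3, i ≠ 0 → ∀ k : ZMod J, ZMod.castHom h3 (ZMod 3) k = i →
        ¬ k.val % 3 = 0 := fun i hi k hk h0 => hi (hk ▸ (val_mod_three_eq_zero_iff h3 k).1 h0)
    have h1 := hnb 1 (by decide) (j + 1) (by rw [map_add, hj', map_one, zero_add])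
    have h2 := hnb 2 (by decide) (j - 1) (by rw [map_sub, hj', map_one]; decide)
    have h3' := hnb 1 (by decide) (j - 2) (by rw [map_sub, hj', map_ofNat]; decide)
    simp only [L96B, PiLp.toLp_apply, L96P_apply, if_neg h1, if_neg h2, if_neg h3']
  · rfl

theorem norm_L96Q_L96B_le (h3 : 3 ∣ J) (u w : E) :
    ‖L96Q (L96B u w)‖ ≤ 2 * ‖L96P u‖ * ‖L96P w‖ :=
  L96Q_L96B h3 u w ▸ (norm_L96Q_le _).trans (norm_L96B_le _ _)

theorem HasDerivAt.L96P {w : ℝ → E} {w' : E} {t : ℝ} (hw : HasDerivAt w w' t) :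
    HasDerivAt (fun s => L96P (w s)) (L96P w') t :=
  (L96PL.hasFDerivAt (x := w t)).comp_hasDerivAt t hw

theorem HasDerivAt.L96Q {w : ℝ → E} {w' : E} {t : ℝ} (hw : HasDerivAt w w' t) :
    HasDerivAt (fun s => L96Q (w s)) (L96Q w') t :=
  hw.sub hw.L96P

end Projections

section Dynamics

theorem norm_L96f_sq (F : ℝ) : ‖(L96f F : E)‖ ^ 2 = J * F ^ 2 := by
  simp [EuclideanSpace.real_norm_sq_eq, L96f, ZMod.card]

theorem L96Sol.comp_const_add {F t₀ : ℝ} {I I' : Set ℝ} {v : ℝ → E} (hv : L96Sol F I v)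
    (hI : ∀ s ∈ I', t₀ + s ∈ I) : L96Sol F I' (fun s => v (t₀ + s)) := fun s hs => by
  have h := (hv (t₀ + s) (hI s hs)).scomp s ((hasDerivAt_id s).const_add t₀)
  rwa [one_smul] at h

-- `B` drops out of the energy balance: `½ (‖u‖²)' = -‖u‖² + ⟪u, f⟫`.
theorem L96Sol.norm_le {F T M : ℝ} {u : ℝ → E} (hu : L96Sol F (Set.Icc 0 T) u)
    (h0 : ‖u 0‖ ≤ M) (hf : ‖(L96f F : E)‖ ≤ M) : ∀ t ∈ Set.Icc 0 T, ‖u t‖ ≤ M := by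
  have hM : 0 ≤ M := (norm_nonneg _).trans h0
  have hsq := norm_sq_le_of_inner_add_deriv_le (c := M) hu fun t _ => by
    rw [show -u t - L96B (u t) (u t) + L96f F + u t = L96f F - L96B (u t) (u t) by abel,
      inner_sub_right, real_inner_comm (L96B _ _), inner_L96B_self, sub_zero, mul_comm]
    exact (real_inner_le_norm _ _).trans (mul_le_mul_of_nonneg_left hf (norm_nonneg _))
  intro t ht
  refine (sq_le_sq₀ (norm_nonneg _) hM).1 ((hsq t ht).trans ?_)
  nlinarith [Real.exp_pos (-t), pow_le_pow_left₀ (norm_nonneg _) h0 2]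

theorem L96Sol.hasDerivAt_sub {F : ℝ} {I : Set ℝ} {u v : ℝ → E} (hu : L96Sol F I u)
    (hv : L96Sol F I v) {t : ℝ} (ht : t ∈ I) :
    HasDerivAt (fun s => u s - v s) (-(u t - v t) - L96B (u t - v t) (u t + v t)) t :=
  ((hu t ht).sub (hv t ht)).congr_deriv (by rw [← L96B_self_sub_L96B_self]; abel)

end Dynamics

section Synchronization

variable {F M h : ℝ} {u v : ℝ → EuclideanSpace ℝ (ZMod J)}

theorem norm_neg_sub_L96B_le (w u v : E) (hu : ‖u‖ ≤ M) (hv : ‖v‖ ≤ M) :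
    ‖-w - L96B w (u + v)‖ ≤ (1 + 4 * M) * ‖w‖ := by
  have huv : ‖u + v‖ ≤ 2 * M := (norm_add_le _ _).trans (by linarith)
  calc ‖-w - L96B w (u + v)‖ ≤ ‖w‖ + 2 * ‖w‖ * ‖u + v‖ :=
        (norm_sub_le _ _).trans (by rw [norm_neg]; gcongr; exact norm_L96B_le _ _)
    _ ≤ (1 + 4 * M) * ‖w‖ := by nlinarith [norm_nonneg w]

theorem L96Sol.norm_sub_le_exp (hu : L96Sol F (Set.Icc 0 h) u) (hv : L96Sol F (Set.Icc 0 h) v)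
    (huM : ∀ s ∈ Set.Icc 0 h, ‖u s‖ ≤ M) (hvM : ∀ s ∈ Set.Icc 0 h, ‖v s‖ ≤ M) :
    ∀ s ∈ Set.Icc 0 h, ‖u s - v s‖ ≤ ‖u 0 - v 0‖ * Real.exp ((1 + 4 * M) * s) := by
  intro s hs
  have hw : ∀ t ∈ Set.Icc 0 h, HasDerivAt (fun s => u s - v s)
      (-(u t - v t) - L96B (u t - v t) (u t + v t)) t := fun t ht => hu.hasDerivAt_sub hv ht
  have := norm_le_gronwallBound_of_norm_deriv_right_le (ε := 0)
    (fun t ht => (hw t ht).continuousAt.continuousWithinAt)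
    (fun t ht => (hw t (Set.Ico_subset_Icc_self ht)).hasDerivWithinAt) le_rfl
    (fun t ht => by
      rw [add_zero]
      exact norm_neg_sub_L96B_le _ _ _ (huM t (Set.Ico_subset_Icc_self ht))
        (hvM t (Set.Ico_subset_Icc_self ht))) s hs
  rwa [gronwallBound_ε0, sub_zero] at this

theorem L96Sol.norm_L96P_sub_le (hu : L96Sol F (Set.Icc 0 h) u) (hv : L96Sol F (Set.Icc 0 h) v)
    (huM : ∀ s ∈ Set.Icc 0 h, ‖u s‖ ≤ M) (hvM : ∀ s ∈ Set.Icc 0 h, ‖v s‖ ≤ M) :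
    ∀ s ∈ Set.Icc 0 h, ‖L96P (u s - v s)‖ ≤
      ‖L96P (u 0 - v 0)‖ + (1 + 4 * M) * Real.exp ((1 + 4 * M) * h) * h * ‖u 0 - v 0‖ := by
  intro s hs
  have hM : 0 ≤ M := (norm_nonneg _).trans (huM s hs)
  have hdrift : ‖(u s - v s) - (u 0 - v 0)‖ ≤
      (1 + 4 * M) * Real.exp ((1 + 4 * M) * h) * ‖u 0 - v 0‖ * ‖s - 0‖ :=
    (convex_Icc 0 h).norm_image_sub_le_of_norm_hasDerivWithin_le
      (fun t ht => (hu.hasDerivAt_sub hv ht).hasDerivWithinAt)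
      (fun t ht => (norm_neg_sub_L96B_le _ _ _ (huM t ht) (hvM t ht)).trans <| by
        have hexp : Real.exp ((1 + 4 * M) * t) ≤ Real.exp ((1 + 4 * M) * h) :=
          Real.exp_le_exp.2 (by nlinarith [ht.2])
        rw [mul_assoc, mul_comm (Real.exp _)]
        gcongr
        exact (hu.norm_sub_le_exp hv huM hvM t ht).trans (by gcongr))
      ⟨le_rfl, hs.1.trans hs.2⟩ hs
  rw [sub_zero, Real.norm_of_nonneg hs.1] at hdrift
  calc ‖L96P (u s - v s)‖ ≤ ‖L96P (u 0 - v 0)‖ + ‖L96P ((u s - v s) - (u 0 - v 0))‖ := by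
        rw [L96P_sub (u s - v s)]; exact norm_le_insert' _ _
    _ ≤ _ := by
        gcongr
        refine (norm_L96P_le _).trans (hdrift.trans ?_)
        rw [mul_right_comm _ h]
        exact mul_le_mul_of_nonneg_left hs.2 (by positivity)

theorem L96Sol.norm_L96Q_sub_le (h3 : 3 ∣ J) (hh : 0 ≤ h) (hu : L96Sol F (Set.Icc 0 h) u)
    (hv : L96Sol F (Set.Icc 0 h) v) (huM : ∀ s ∈ Set.Icc 0 h, ‖u s‖ ≤ M)
    (hvM : ∀ s ∈ Set.Icc 0 h, ‖v s‖ ≤ M) {S : ℝ}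
    (hS : ∀ s ∈ Set.Icc 0 h, ‖L96P (u s - v s)‖ ≤ S) :
    ‖L96Q (u h - v h)‖ ≤ Real.exp (-(h / 2)) * ‖L96Q (u 0 - v 0)‖ + 4 * M * S * √h := by
  have h0 : (0 : ℝ) ∈ Set.Icc 0 h := ⟨le_rfl, hh⟩
  have hc : 0 ≤ 4 * M * S := by
    have := (norm_nonneg _).trans (huM 0 h0)
    have := (norm_nonneg _).trans (hS 0 h0)
    positivity
  have hsq := norm_sq_le_of_inner_add_deriv_le (c := 4 * M * S)
    (fun t ht => (hu.hasDerivAt_sub hv ht).L96Q) (fun t ht => by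
      have hQ : L96Q (-(u t - v t) - L96B (u t - v t) (u t + v t)) + L96Q (u t - v t) =
          -L96Q (L96B (u t - v t) (u t + v t)) := by
        ext j; simp only [L96Q_apply, PiLp.add_apply, PiLp.sub_apply, PiLp.neg_apply]
        split_ifs <;> ring
      have hB : ‖L96Q (L96B (u t - v t) (u t + v t))‖ ≤ 4 * M * S := by
        refine (norm_L96Q_L96B_le h3 _ _).trans ?_
        have hPuv : ‖L96P (u t + v t)‖ ≤ M + M := (norm_L96P_le _).trans
          ((norm_add_le _ _).trans (add_le_add (huM t ht) (hvM t ht)))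
        nlinarith [hS t ht, norm_nonneg (L96P (u t - v t)), norm_nonneg (L96P (u t + v t))]
      rw [hQ, inner_neg_right, mul_comm]
      exact (neg_le_abs _).trans ((abs_real_inner_le_norm _ _).trans
        (mul_le_mul_of_nonneg_left hB (norm_nonneg _)))) h ⟨hh, le_rfl⟩
  have hexp : Real.exp (-(h / 2)) ^ 2 = Real.exp (-h) := by rw [← Real.exp_nat_mul]; ring_nf
  refine (sq_le_sq₀ (norm_nonneg _) (by positivity)).1 ?_
  calc ‖L96Q (u h - v h)‖ ^ 2
      ≤ Real.exp (-h) * ‖L96Q (u 0 - v 0)‖ ^ 2 + (4 * M * S) ^ 2 * (1 - Real.exp (-h)) := hsq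
    _ ≤ (Real.exp (-(h / 2)) * ‖L96Q (u 0 - v 0)‖) ^ 2 + (4 * M * S * √h) ^ 2 := by
        rw [mul_pow (Real.exp _), mul_pow (4 * M * S), hexp, Real.sq_sqrt hh]
        gcongr
        linarith [Real.add_one_le_exp (-h)]
    _ ≤ (Real.exp (-(h / 2)) * ‖L96Q (u 0 - v 0)‖ + 4 * M * S * √h) ^ 2 := by
        nlinarith [mul_nonneg
          (mul_nonneg (Real.exp_pos (-(h / 2))).le (norm_nonneg (L96Q (u 0 - v 0))))
          (mul_nonneg hc (Real.sqrt_nonneg h))]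

end Synchronization

section ThreeDVar

def threeDVarUpdate (η : ℝ) (x y : E) : E := (η / (1 + η)) • L96P x + L96Q x + (1 / (1 + η)) • y

def L96Norm (z : E) : ℝ := ‖z‖ + ‖L96P z‖

theorem norm_3dvar_update_sub_le {η ε : ℝ} (hη : 0 ≤ η) {x y ν : E} (hνP : L96P ν = ν)
    (hν : ‖ν‖ ≤ ε) :
    L96Norm (threeDVarUpdate η x (L96P y + ν) - y) ≤
      2 * η * ‖L96P (x - y)‖ + ‖L96Q (x - y)‖ + 2 * ε := by
  have hη1 : (0 : ℝ) < 1 + η := by linarith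
  have hν0 : ∀ j : ZMod J, j.val % 3 = 0 → ν j = 0 := fun j hj => by
    rw [← hνP, L96P_apply, if_pos hj]
  have hsplit : threeDVarUpdate η x (L96P y + ν) - y =
      (η / (1 + η)) • L96P (x - y) + (1 / (1 + η)) • ν + L96Q (x - y) := by
    ext j
    simp only [threeDVarUpdate, PiLp.add_apply, PiLp.sub_apply, PiLp.smul_apply, smul_eq_mul,
      L96P_apply, L96Q_apply]
    split_ifs with hj
    · rw [hν0 j hj]; ring
    · field_simp; ring
  have hPsplit : L96P ((η / (1 + η)) • L96P (x - y) + (1 / (1 + η)) • ν + L96Q (x - y)) =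
      (η / (1 + η)) • L96P (x - y) + (1 / (1 + η)) • ν := by
    rw [← L96PL_apply, map_add, map_add, map_smul, map_smul, L96PL_apply, L96PL_apply, L96PL_apply,
      L96P_L96P, hνP, L96P_L96Q, add_zero]
  have hobs : ‖(η / (1 + η)) • L96P (x - y) + (1 / (1 + η)) • ν‖ ≤ η * ‖L96P (x - y)‖ + ε := by
    refine (norm_add_le _ _).trans (add_le_add ?_ ?_) <;>
      rw [norm_smul, Real.norm_of_nonneg (by positivity)]
    · exact mul_le_mul_of_nonneg_right (div_le_self hη (by linarith)) (norm_nonneg _)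
    · exact (mul_le_of_le_one_left (norm_nonneg _)
        ((div_le_one hη1).2 (by linarith))).trans hν
  rw [L96Norm, hsplit, hPsplit]
  linarith [norm_add_le ((η / (1 + η)) • L96P (x - y) + (1 / (1 + η)) • ν) (L96Q (x - y))]

theorem L96Sol.L96Norm_3dvar_sub_le (h3 : 3 ∣ J) {F M h η ε : ℝ} (hh : 0 < h) (hη : 0 ≤ η)
    (hgain : (2 * η + 4 * M * √h) * (1 + 4 * M) ≤ 1 / 48) (hLh : (1 + 4 * M) * h ≤ 1)
    {u v : ℝ → E} (hu : L96Sol F (Set.Icc 0 h) u) (hv : L96Sol F (Set.Icc 0 h) v)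
    (huM : ∀ s ∈ Set.Icc 0 h, ‖u s‖ ≤ M) (hvM : ∀ s ∈ Set.Icc 0 h, ‖v s‖ ≤ M)
    {ν : E} (hνP : L96P ν = ν) (hν : ‖ν‖ ≤ ε) :
    L96Norm (threeDVarUpdate η (u h) (L96P (v h) + ν) - v h) ≤
      (1 - h / 8) * L96Norm (u 0 - v 0) + 2 * ε := by
  have hM : 0 ≤ M := (norm_nonneg _).trans (huM 0 ⟨le_rfl, hh.le⟩)
  have hh1 : h ≤ 1 := by nlinarith
  set W := ‖u 0 - v 0‖
  set b := ‖L96P (u 0 - v 0)‖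
  set L := 1 + 4 * M
  set ρ := 2 * η + 4 * M * √h
  have hρ : 0 ≤ ρ := by positivity
  have hP := hu.norm_L96P_sub_le hv huM hvM
  have hQ := hu.norm_L96Q_sub_le h3 hh.le hv huM hvM hP
  have hPh := hP h ⟨hh.le, le_rfl⟩
  have hQW : ‖L96Q (u 0 - v 0)‖ ≤ W := norm_L96Q_le _
  have hexpL : Real.exp (L * h) ≤ 3 :=
    (Real.exp_le_exp.2 hLh).trans (Real.exp_one_lt_d9.le.trans (by norm_num))
  have hexph := exp_neg_half_le hh.le hh1
  have hρb : ρ * b ≤ b / 48 := by nlinarith [norm_nonneg (L96P (u 0 - v 0))]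
  have hρW : ρ * (L * Real.exp (L * h) * h * W) ≤ h / 16 * W := by
    have : ρ * L * Real.exp (L * h) ≤ 1 / 16 := by nlinarith [Real.exp_pos (L * h)]
    nlinarith [mul_nonneg hh.le (norm_nonneg (u 0 - v 0))]
  calc L96Norm (threeDVarUpdate η (u h) (L96P (v h) + ν) - v h)
      ≤ 2 * η * ‖L96P (u h - v h)‖ + ‖L96Q (u h - v h)‖ + 2 * ε :=
        norm_3dvar_update_sub_le hη hνP hν
    _ ≤ ρ * (b + L * Real.exp (L * h) * h * W) + Real.exp (-(h / 2)) * W + 2 * ε := by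
        have := mul_le_mul_of_nonneg_left hPh (by positivity : (0 : ℝ) ≤ 2 * η)
        have := mul_le_mul_of_nonneg_left hQW (Real.exp_pos (-(h / 2))).le
        linarith
    _ ≤ (1 - h / 8) * L96Norm (u 0 - v 0) + 2 * ε := by
        rw [L96Norm]
        nlinarith [norm_nonneg (u 0 - v 0), norm_nonneg (L96P (u 0 - v 0))]

theorem L96Sol.L96Norm_3dvar_step (h3 : 3 ∣ J) {F r R h η ε t₀ : ℝ} (hh : 0 < h) (hη : 0 ≤ η)
    (hgain : (2 * η + 4 * (r + R) * √h) * (1 + 4 * (r + R)) ≤ 1 / 48)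
    (hLh : (1 + 4 * (r + R)) * h ≤ 1) {u v : ℝ → E} (hu : L96Sol F (Set.Icc 0 h) u)
    (hv : L96Sol F (Set.Ici 0) v) (hvr : ∀ t, 0 ≤ t → ‖v t‖ ≤ r) (hf : ‖(L96f F : E)‖ ≤ r)
    (ht₀ : 0 ≤ t₀) (herr : L96Norm (u 0 - v t₀) ≤ R) {ν : E} (hνP : L96P ν = ν) (hν : ‖ν‖ ≤ ε) :
    L96Norm (threeDVarUpdate η (u h) (L96P (v (t₀ + h)) + ν) - v (t₀ + h)) ≤
      (1 - h / 8) * L96Norm (u 0 - v t₀) + 2 * ε := by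
  have hR : ‖u 0 - v t₀‖ ≤ R := (le_add_of_nonneg_right (norm_nonneg _)).trans herr
  have hvs : L96Sol F (Set.Icc 0 h) (fun s => v (t₀ + s)) :=
    hv.comp_const_add fun s hs => add_nonneg ht₀ hs.1
  have huM := hu.norm_le (M := r + R) ((norm_le_norm_sub_add (u 0) (v t₀)).trans
    (by linarith [hvr t₀ ht₀])) (hf.trans (by linarith [(norm_nonneg _).trans hR]))
  have hvM : ∀ s ∈ Set.Icc 0 h, ‖v (t₀ + s)‖ ≤ r + R := fun s hs =>
    (hvr _ (add_nonneg ht₀ hs.1)).trans (by linarith [(norm_nonneg _).trans hR])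
  simpa using hu.L96Norm_3dvar_sub_le h3 hh hη hgain hLh hvs huM hvM hνP hν

theorem exists_3dvar_parameters {M : ℝ} (hM : 0 ≤ M) :
    ∃ h η : ℝ, 0 < h ∧ 0 < η ∧ (2 * η + 4 * M * √h) * (1 + 4 * M) ≤ 1 / 48 ∧
      (1 + 4 * M) * h ≤ 1 := by
  set L := 1 + 4 * M
  have hL : 1 ≤ L := by linarith
  set η := 1 / (144 * L)
  have hη : 0 < η := by positivity
  have hηL : η * L = 1 / 144 := by simp only [η]; field_simp
  refine ⟨(η / L) ^ 2, η, by positivity, hη, ?_, ?_⟩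
  · rw [Real.sqrt_sq (by positivity)]
    have : 4 * M * (η / L) ≤ η := by
      rw [mul_div_assoc']; exact div_le_of_le_mul₀ (by positivity) hη.le (by nlinarith)
    nlinarith
  · rw [div_pow, mul_div_assoc', div_le_one (by positivity)]
    nlinarith

end ThreeDVar

theorem l96_discrete_3dvar_accuracy_general {J J' : ℕ} [NeZero J] (hJ : J = 3 * J') (F K : ℝ)
    (hK : K = 2 * J * F ^ 2) :
    ∀ R0 : ℝ, 0 < R0 →
      ∃ h η α ε0 : ℝ, 0 < h ∧ 0 < η ∧ 0 < α ∧ α < 1 ∧ 0 < ε0 ∧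
        ∀ v : ℝ → EuclideanSpace ℝ (ZMod J), L96Sol F (Set.Ici 0) v →
        (∀ t : ℝ, 0 ≤ t → ‖v t‖ ^ 2 ≤ K) →
        ∀ ε : ℝ, 0 < ε → ε ≤ ε0 →
        ∀ ν : ℕ → EuclideanSpace ℝ (ZMod J),
          (∀ k : ℕ, 1 ≤ k → ν k = L96P (ν k) ∧ ‖ν k‖ ≤ ε) →
        ∀ m : ℕ → EuclideanSpace ℝ (ZMod J),
          ‖m 0 - v 0‖ + ‖L96P (m 0 - v 0)‖ ≤ R0 →
        ∀ u : ℕ → ℝ → EuclideanSpace ℝ (ZMod J),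
          (∀ k : ℕ, L96Sol F (Set.Icc 0 h) (u k) ∧ u k 0 = m k) →
          (∀ k : ℕ, m (k + 1) =
            (η / (1 + η)) • L96P (u k h) + L96Q (u k h)
              + (1 / (1 + η)) • (L96P (v (((k : ℝ) + 1) * h)) + ν (k + 1))) →
          (∀ k : ℕ,
            ‖m (k + 1) - v (((k : ℝ) + 1) * h)‖
                + ‖L96P (m (k + 1) - v (((k : ℝ) + 1) * h))‖ ≤
              α * (‖m k - v ((k : ℝ) * h)‖ + ‖L96P (m k - v ((k : ℝ) * h))‖) + 2 * ε) ∧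
          Filter.limsup
            (fun k : ℕ => ‖m k - v ((k : ℝ) * h)‖ + ‖L96P (m k - v ((k : ℝ) * h))‖)
            Filter.atTop ≤ 2 * ε / (1 - α) := by
  intro R0 hR0
  obtain ⟨h, η, hh, hη, hgain, hLh⟩ := exists_3dvar_parameters (M := √K + R0) (by positivity)
  have hh1 : h ≤ 1 := by nlinarith [Real.sqrt_nonneg K]
  refine ⟨h, η, 1 - h / 8, h * R0 / 16, hh, hη, by linarith, by linarith, by positivity, ?_⟩
  intro v hv hvK ε _ hεle ν hν m hm0 u hu hrec
  have hf : ‖(L96f F : EuclideanSpace ℝ (ZMod J))‖ ≤ √K :=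
    Real.le_sqrt_of_sq_le (by
      rw [norm_L96f_sq, hK]; nlinarith [sq_nonneg F, J.cast_nonneg (α := ℝ)])
  have step : ∀ k : ℕ, L96Norm (m k - v (k * h)) ≤ R0 →
      L96Norm (m (k + 1) - v ((k + 1) * h)) ≤ (1 - h / 8) * L96Norm (m k - v (k * h)) + 2 * ε := by
    intro k hk
    have := (hu k).1.L96Norm_3dvar_step ⟨J', hJ⟩ hh hη.le hgain hLh hv
      (fun t ht => Real.le_sqrt_of_sq_le (hvK t ht)) hf (by positivity) ((hu k).2 ▸ hk)
      (hν (k + 1) k.succ_pos).1.symm (hν (k + 1) k.succ_pos).2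
    rw [(hu k).2, ← add_one_mul] at this
    rwa [hrec k]
  have hbdd : ∀ k : ℕ, L96Norm (m k - v (k * h)) ≤ R0 := by
    intro k
    induction k with
    | zero => simpa [L96Norm] using hm0
    | succ k ih => push_cast; nlinarith [step k ih]
  refine ⟨fun k => step k (hbdd k), ?_⟩
  refine limsup_le_div_one_sub_of_le_mul_add (fun k => by positivity) (by linarith) (by linarith)
    fun k => ?_
  simpa [L96Norm] using step k (hbdd k)

/-- accuracy of discrete 3DVAR with bounded noise, in the norm
`‖z‖ = |z| + |Pz|`. -/
theorem l96_discrete_3dvar_accuracy {J J' : ℕ} [NeZero J] (hJ' : 1 ≤ J') (hJ : J = 3 * J')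
    (F K β : ℝ) (hF : 0 < F)
    (hK : K = 2 * J * F ^ 2) (hβdef : β = 2 * (2 * Real.sqrt K - 1)) (hβ : 0 < β) :
    ∀ R0 : ℝ, 0 < R0 →
      ∃ h η α ε0 : ℝ, 0 < h ∧ 0 < η ∧ 0 < α ∧ α < 1 ∧ 0 < ε0 ∧
        ∀ v : ℝ → EuclideanSpace ℝ (ZMod J), L96Sol F (Set.Ici 0) v →
        (∀ t : ℝ, 0 ≤ t → ‖v t‖ ^ 2 ≤ K) →
        ∀ ε : ℝ, 0 < ε → ε ≤ ε0 →
        ∀ ν : ℕ → EuclideanSpace ℝ (ZMod J),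
          (∀ k : ℕ, 1 ≤ k → ν k = L96P (ν k) ∧ ‖ν k‖ ≤ ε) →
        ∀ m : ℕ → EuclideanSpace ℝ (ZMod J),
          ‖m 0 - v 0‖ + ‖L96P (m 0 - v 0)‖ ≤ R0 →
        ∀ u : ℕ → ℝ → EuclideanSpace ℝ (ZMod J),
          (∀ k : ℕ, L96Sol F (Set.Icc 0 h) (u k) ∧ u k 0 = m k) →
          (∀ k : ℕ, m (k + 1) =
            (η / (1 + η)) • L96P (u k h) + L96Q (u k h)
              + (1 / (1 + η)) • (L96P (v (((k : ℝ) + 1) * h)) + ν (k + 1))) →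
          (∀ k : ℕ,
            ‖m (k + 1) - v (((k : ℝ) + 1) * h)‖
                + ‖L96P (m (k + 1) - v (((k : ℝ) + 1) * h))‖ ≤
              α * (‖m k - v ((k : ℝ) * h)‖ + ‖L96P (m k - v ((k : ℝ) * h))‖) + 2 * ε) ∧
          Filter.limsup
            (fun k : ℕ => ‖m k - v ((k : ℝ) * h)‖ + ‖L96P (m k - v ((k : ℝ) * h))‖)
            Filter.atTop ≤ 2 * ε / (1 - α) :=
  l96_discrete_3dvar_accuracy_general hJ F K hK
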